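/- arXiv:1306.3595 — 3 statements merged into one kernel-verified Lean document; each statement's English description precedes it below -/
import Mathlib

section
/- Let d ∈ (0,1), let F ∈ SR_d^2(0+), let t₀ ∈ ℝ and let s ≤ 0. Then for every ε ∈ (0,d), C_F^{d,s}(t₀) ⊆ C^{d−ε,s}(t₀); that is, every continuous function in the 2-microlocal space with gauge F of parameters (d,s) at t₀ lies in the classical 2-microlocal space C^{d−ε,s}(t₀). -/
open Set Filter MeasureTheory intervalIntegral Polynomial Metric
open scoped Topology

noncomputable section

/-- Mixed partial derivative `F^{(n,m)}`: `n` derivatives in the first (time) variable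
and `m` derivatives in the second variable. -/
noncomputable def pderiv2 (n m : ℕ) (F : ℝ → ℝ → ℝ) : ℝ → ℝ → ℝ :=
  fun s r => iteratedDeriv m (fun r' => iteratedDeriv n (fun s' => F s' r') s) r

/-- The closed half-plane `E = {(s,r) : r ≤ s}`. -/
def Ebar : Set (ℝ × ℝ) := {p | p.2 ≤ p.1}

/-- The open half-plane `Ẽ = {(s,r) : r < s}`. -/
def Etil : Set (ℝ × ℝ) := {p | p.2 < p.1}

/-- Membership in `C₊^{(k)}(E)` : continuous on `E`, `k` times continuously
differentiable on `Ẽ`, and strictly positive on `Ẽ`. -/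
structure CPlus (k : ℕ) (F : ℝ → ℝ → ℝ) : Prop where
  cont : ContinuousOn (fun p : ℝ × ℝ => F p.1 p.2) Ebar
  smooth : ContDiffOn ℝ k (fun p : ℝ × ℝ => F p.1 p.2) Etil
  pos : ∀ p ∈ Etil, 0 < F p.1 p.2

/-- `F` is a function of smooth variation of index `(ρ, k)` at the diagonal,
i.e. `F ∈ SR_ρ^k(0+)`. -/
structure SmoothVariation (ρ : ℝ) (k : ℕ) (F : ℝ → ℝ → ℝ) : Prop where
  mem : CPlus k F
  condA : ∀ K : Set ℝ, IsCompact K → ∀ ε > 0, ∃ h₀ > 0, ∀ h : ℝ, 0 < h → h < h₀ →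
    ∀ t ∈ K, |h * pderiv2 0 1 F t (t - h) / F t (t - h) + ρ| < ε
  condB : ∀ K : Set ℝ, IsCompact K → ∀ ε > 0, ∃ h₀ > 0, ∀ h : ℝ, 0 < h → h < h₀ →
    ∀ t ∈ K, |h * pderiv2 1 0 F (t + h) t / F (t + h) t - ρ| < ε
  condC : ∀ j : ℕ, 2 ≤ j → j ≤ k → ∀ K : Set ℝ, IsCompact K → ∀ ε > 0, ∃ h₀ > 0,
    ∀ h : ℝ, 0 < h → h < h₀ → ∀ t ∈ K,
      |h ^ j * pderiv2 (j - 1) 1 F t (t - h) / F t (t - h)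
        + ∏ i ∈ Finset.range j, (ρ - (i : ℝ))| < ε
  condD : ∀ K : Set ℝ, IsCompact K → ∀ ε > 0, ∃ h₀ > 0, ∀ h : ℝ, 0 < h → h < h₀ →
    ∀ t ∈ K, |h ^ 2 * pderiv2 0 2 F t (t - h) / F t (t - h) - ρ * (ρ - 1)| < ε

/-- The 2-microlocal space with gauge function `F`, `C_F^{d,s'}(t₀)`. -/
def MemCF (F : ℝ → ℝ → ℝ) (d s' t₀ : ℝ) (g : ℝ → ℝ) : Prop :=
  ∃ C > 0, ∃ h > 0, ∃ P : Polynomial ℝ, (P.natDegree : ℤ) ≤ ⌊d - s'⌋ ∧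
    ∀ u v : ℝ, u ∈ Metric.ball t₀ h → v ∈ Metric.ball t₀ h → v ≤ u →
      |(g u - P.eval u) - (g v - P.eval v)| ≤
        C * F u v * (|u - t₀| + |v - t₀|) ^ (-s')

/-- The classical 2-microlocal space `C^{σ,s'}(t₀)`. -/
def MemC2ML (σ s' t₀ : ℝ) (g : ℝ → ℝ) : Prop :=
  ∃ C > 0, ∃ h > 0, ∃ P : Polynomial ℝ, (P.natDegree : ℤ) ≤ ⌊σ - s'⌋ ∧
    ∀ u v : ℝ, u ∈ Metric.ball t₀ h → v ∈ Metric.ball t₀ h →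
      |(g u - P.eval u) - (g v - P.eval v)| ≤
        C * |u - v| ^ σ * (|u - t₀| + |v - t₀|) ^ (-s')

/-- The pointwise Hölder space `C^l(t₀)`. -/
def PtwHolder (l t₀ : ℝ) (g : ℝ → ℝ) : Prop :=
  ∃ C > 0, ∃ h > 0, ∃ P : Polynomial ℝ, (P.natDegree : ℤ) ≤ ⌊l⌋ ∧
    ∀ t ∈ Metric.ball t₀ h, |g t - P.eval t| ≤ C * |t - t₀| ^ l

/-- The pointwise Hölder exponent `h_g(t₀) = sup{l : g ∈ C^l(t₀)}`. -/
def holderExp (g : ℝ → ℝ) (t₀ : ℝ) : ℝ := sSup {l | PtwHolder l t₀ g}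

/-- The Hölder exponent with gauge function `F`,
`h̄^d_g(t₀) = d − inf{s' ≤ 0 : g ∈ C_F^{d,s'}(t₀)}`. -/
def holderGaugeExp (F : ℝ → ℝ → ℝ) (d : ℝ) (g : ℝ → ℝ) (t₀ : ℝ) : ℝ :=
  d - sInf {s' | s' ≤ 0 ∧ MemCF F d s' t₀ g}

/-- The 2-microlocal frontier `σ_{g,t₀}(s') = sup{σ ∈ [0,1) : g ∈ C^{σ,s'}(t₀)}`. -/
def frontier2ML (g : ℝ → ℝ) (t₀ s' : ℝ) : ℝ :=
  sSup {σ | σ ∈ Set.Ico (0:ℝ) 1 ∧ MemC2ML σ s' t₀ g}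

/-- `g` is càdlàg on `[0,∞)`: right-continuous with left limits. -/
def CadlagOn (g : ℝ → ℝ) : Prop :=
  (∀ t : ℝ, 0 ≤ t → Tendsto g (𝓝[Set.Ici t] t) (𝓝 (g t))) ∧
  (∀ t : ℝ, 0 < t → ∃ L : ℝ, Tendsto g (𝓝[Set.Iio t] t) (𝓝 L))

/-!
By condition (a) of smooth variation, `x ↦ log F(t, t - x)` has derivative close to `d / x`
for small `x`, uniformly for `t` near `t₀`. Hence for `σ = d - ε` the quotient
`F(t, t - x) / x ^ σ` increases in small `x`, which gives `F(t, t - x) ≤ M x ^ σ`, and the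
gauge condition turns into the increment bound of `C^{σ,s}(t₀)`. The polynomial it comes with
may have degree `m = ⌊σ - s⌋ + 1`, one too many; its term `c (u - t₀) ^ m` can be dropped,
since with `R = |u - t₀| + |v - t₀| ≤ 1` its increments are `O(|u - v| R ^ (m - 1))`, which is
at most `|u - v| ^ σ R ^ (-s)` because `σ ≤ 1` and `m > σ - s`.
-/

theorem monotoneOn_div_rpow_of_mul_le_mul_deriv {φ φ' : ℝ → ℝ} {a σ : ℝ}
    (hφ : ∀ x ∈ Ioo 0 a, HasDerivAt φ (φ' x) x)
    (hσ : ∀ x ∈ Ioo 0 a, σ * φ x ≤ x * φ' x) :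
    MonotoneOn (fun x => φ x / x ^ σ) (Ioo 0 a) := by
  have hderiv : ∀ x ∈ Ioo 0 a, HasDerivAt (fun x => φ x / x ^ σ)
      ((φ' x * x ^ σ - φ x * (σ * x ^ (σ - 1))) / (x ^ σ) ^ 2) x := fun x hx =>
    (hφ x hx).div (Real.hasDerivAt_rpow_const (Or.inl hx.1.ne'))
      (Real.rpow_pos_of_pos hx.1 σ).ne'
  refine monotoneOn_of_hasDerivWithinAt_nonneg (convex_Ioo 0 a)
    (fun x hx => (hderiv x hx).continuousAt.continuousWithinAt)
    (fun x hx => (hderiv x (interior_subset hx)).hasDerivWithinAt) fun x hx => ?_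
  rw [interior_Ioo] at hx
  have hpow : x ^ σ = x ^ (σ - 1) * x := by
    rw [← Real.rpow_add_one hx.1.ne', sub_add_cancel]
  have hnum : φ' x * x ^ σ - φ x * (σ * x ^ (σ - 1)) = x ^ (σ - 1) * (x * φ' x - σ * φ x) := by
    rw [hpow]
    ring
  rw [hnum]
  have hσx := hσ x hx
  exact div_nonneg (mul_nonneg (Real.rpow_nonneg hx.1.le _) (by linarith)) (sq_nonneg _)

theorem CPlus.hasDerivAt_pderiv2_zero_one {k : ℕ} {F : ℝ → ℝ → ℝ} (hF : CPlus k F)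
    (hk : 1 ≤ k) {t r : ℝ} (hr : r < t) : HasDerivAt (F t) (pderiv2 0 1 F t r) r := by
  have hdiff : DifferentiableAt ℝ (fun p : ℝ × ℝ => F p.1 p.2) (t, r) :=
    (hF.smooth.contDiffAt ((isOpen_lt continuous_snd continuous_fst).mem_nhds hr)).differentiableAt
      (by norm_cast; omega)
  have : DifferentiableAt ℝ (F t) r :=
    hdiff.comp (f := fun r => (t, r)) r ((differentiableAt_const t).prodMk differentiableAt_id)
  simpa [pderiv2] using this.hasDerivAt

theorem SmoothVariation.exists_le_mul_rpow {ρ : ℝ} {k : ℕ} {F : ℝ → ℝ → ℝ}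
    (hF : SmoothVariation ρ k F) (hk : 1 ≤ k) {K : Set ℝ} (hK : IsCompact K) {σ : ℝ}
    (hσ : σ < ρ) :
    ∃ δ > 0, ∃ M, 0 ≤ M ∧ ∀ t ∈ K, ∀ x ∈ Ioc 0 δ, F t (t - x) ≤ M * x ^ σ := by
  obtain ⟨a, ha, hA⟩ := hF.condA K hK (ρ - σ) (sub_pos.2 hσ)
  have hmono : ∀ t ∈ K, MonotoneOn (fun x => F t (t - x) / x ^ σ) (Ioo 0 a) := by
    intro t ht
    refine monotoneOn_div_rpow_of_mul_le_mul_deriv (φ' := fun x => -pderiv2 0 1 F t (t - x))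
      (fun x hx => ?_) (fun x hx => ?_)
    · exact (hF.mem.hasDerivAt_pderiv2_zero_one hk (sub_lt_self t hx.1)).comp_const_sub t x
    · have hpos : 0 < F t (t - x) := hF.mem.pos (t, t - x) (sub_lt_self t hx.1)
      have hlt : x * pderiv2 0 1 F t (t - x) / F t (t - x) < -σ := by
        linarith [(abs_lt.1 (hA x hx.1 hx.2 t ht)).2]
      rw [div_lt_iff₀ hpos] at hlt
      linarith
  set δ := a / 2 with hδ_def
  have hδ : 0 < δ := by positivity
  obtain ⟨B, hB⟩ := hK.bddAbove_image (f := fun t => F t (t - δ))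
    (hF.mem.cont.comp_continuous (f := fun t => (t, t - δ)) (by fun_prop) fun t => by
      show t - δ ≤ t; linarith).continuousOn
  refine ⟨δ, hδ, max B 0 / δ ^ σ, by positivity, fun t ht x hx => ?_⟩
  have hx0 := hx.1
  calc F t (t - x) = F t (t - x) / x ^ σ * x ^ σ :=
        (div_mul_cancel₀ _ (Real.rpow_pos_of_pos hx0 σ).ne').symm
    _ ≤ F t (t - δ) / δ ^ σ * x ^ σ := mul_le_mul_of_nonneg_right
        (hmono t ht ⟨hx0, by linarith [hx.2]⟩ ⟨hδ, by linarith⟩ hx.2) (by positivity)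
    _ ≤ max B 0 / δ ^ σ * x ^ σ := by
        gcongr
        exact (hB (mem_image_of_mem _ ht)).trans (le_max_left _ _)

theorem MemCF.exists_rpow_increment_bound {F : ℝ → ℝ → ℝ} {d s' t₀ σ r δ M : ℝ} {g : ℝ → ℝ}
    (hmem : MemCF F d s' t₀ g) (hr : 0 < r) (hδ : 0 < δ) (hM : 0 ≤ M)
    (hF : ∀ t ∈ closedBall t₀ r, ∀ x ∈ Ioc 0 δ, F t (t - x) ≤ M * x ^ σ) :
    ∃ C, 0 ≤ C ∧ ∃ h > 0, ∃ P : ℝ[X], (P.natDegree : ℤ) ≤ ⌊d - s'⌋ ∧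
      ∀ u v, u ∈ ball t₀ h → v ∈ ball t₀ h → |(g u - P.eval u) - (g v - P.eval v)| ≤
        C * |u - v| ^ σ * (|u - t₀| + |v - t₀|) ^ (-s') := by
  obtain ⟨C, hC, h, hh, P, hPdeg, hP⟩ := hmem
  refine ⟨C * M, by positivity, min h (min r (δ / 2)), by positivity, P, hPdeg,
    fun u v hu hv => ?_⟩
  wlog hvu : v ≤ u generalizing u v
  · have := this v u hv hu (le_of_not_ge hvu)
    rwa [abs_sub_comm, abs_sub_comm v u, add_comm] at this
  rcases hvu.eq_or_lt with rfl | hlt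
  · rw [sub_self, abs_zero]
    positivity
  rw [mem_ball, Real.dist_eq, lt_min_iff, lt_min_iff] at hu hv
  have huv : u - v ≤ |u - t₀| + |v - t₀| := by
    simpa only [Real.dist_eq] using (le_abs_self _).trans (dist_triangle_right u v t₀)
  have hFuv : F u v ≤ M * |u - v| ^ σ := by
    have hFx := hF u (by rw [mem_closedBall, Real.dist_eq]; linarith) (u - v)
      ⟨sub_pos.2 hlt, by linarith⟩
    rwa [sub_sub_cancel, ← abs_of_pos (sub_pos.2 hlt)] at hFx
  calc |(g u - P.eval u) - (g v - P.eval v)|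
      ≤ C * F u v * (|u - t₀| + |v - t₀|) ^ (-s') :=
        hP u v (by rw [mem_ball, Real.dist_eq]; exact hu.1)
          (by rw [mem_ball, Real.dist_eq]; exact hv.1) hvu
    _ ≤ C * (M * |u - v| ^ σ) * (|u - t₀| + |v - t₀|) ^ (-s') := by gcongr
    _ = C * M * |u - v| ^ σ * (|u - t₀| + |v - t₀|) ^ (-s') := by ring

theorem Polynomial.exists_eval_eq_add_mul_sub_pow {R : Type*} [CommRing R] (P : R[X]) (t₀ : R)
    {n : ℕ} (hP : P.natDegree ≤ n + 1) :
    ∃ Q : R[X], ∃ c : R, Q.natDegree ≤ n ∧ ∀ u, P.eval u = Q.eval u + c * (u - t₀) ^ (n + 1) := by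
  refine ⟨P - C (P.coeff (n + 1)) * (X - C t₀) ^ (n + 1), P.coeff (n + 1), ?_, fun u => by simp⟩
  refine natDegree_le_pred (n := n + 1) ((natDegree_sub_le _ _).trans (max_le hP ?_)) ?_
  · exact (natDegree_C_mul_le _ _).trans
      (by simpa using natDegree_pow_le_of_le (n + 1) (natDegree_X_sub_C_le t₀))
  · have hcoeff := coeff_pow_of_natDegree_le (m := n + 1) (natDegree_X_sub_C_le t₀)
    rw [mul_one] at hcoeff
    simp [hcoeff]

theorem mul_pow_le_rpow_mul_rpow {x R σ a : ℝ} {k : ℕ} (hx : 0 ≤ x) (hxR : x ≤ R) (hR : R ≤ 1)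
    (hσ : σ ≤ 1) (ha : a ≤ k + 1 - σ) : x * R ^ k ≤ x ^ σ * R ^ a := by
  rcases hx.eq_or_lt with rfl | hx
  · rw [zero_mul]
    exact mul_nonneg (Real.rpow_nonneg le_rfl σ) (Real.rpow_nonneg hxR a)
  have hR0 : 0 < R := hx.trans_le hxR
  calc x * R ^ k = x ^ σ * (x ^ (1 - σ) * R ^ (k : ℝ)) := by
        rw [Real.rpow_natCast, ← mul_assoc, ← Real.rpow_add hx, add_sub_cancel, Real.rpow_one]
    _ ≤ x ^ σ * (R ^ (1 - σ) * R ^ (k : ℝ)) := by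
        gcongr
    _ = x ^ σ * R ^ (k + 1 - σ) := by
        rw [← Real.rpow_add hR0]
        ring_nf
    _ ≤ x ^ σ * R ^ a :=
        mul_le_mul_of_nonneg_left (Real.rpow_le_rpow_of_exponent_ge hR0 hR ha) (by positivity)

theorem memC2ML_of_natDegree_le_floor_add_one {σ s' t₀ C h : ℝ} {g : ℝ → ℝ} {P : ℝ[X]}
    (hσ : σ ≤ 1) (hσs : 0 ≤ σ - s') (hC : 0 ≤ C) (hh : 0 < h)
    (hP : (P.natDegree : ℤ) ≤ ⌊σ - s'⌋ + 1)
    (hbound : ∀ u v, u ∈ ball t₀ h → v ∈ ball t₀ h → |(g u - P.eval u) - (g v - P.eval v)| ≤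
      C * |u - v| ^ σ * (|u - t₀| + |v - t₀|) ^ (-s')) :
    MemC2ML σ s' t₀ g := by
  obtain ⟨n, hn⟩ := Int.eq_ofNat_of_zero_le (Int.floor_nonneg.2 hσs)
  have hPn : P.natDegree ≤ n + 1 := by rw [hn] at hP; exact_mod_cast hP
  have hexp : -s' ≤ n + 1 - σ := by
    have hfloor := Int.lt_floor_add_one (σ - s')
    rw [hn] at hfloor
    push_cast at hfloor
    linarith
  obtain ⟨Q, c, hQ, hPQ⟩ := P.exists_eval_eq_add_mul_sub_pow t₀ hPn
  refine ⟨C + |c| * (n + 1) + 1, by positivity, min h (1 / 2), by positivity, Q,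
    by rw [hn]; exact_mod_cast hQ, fun u v hu hv => ?_⟩
  rw [mem_ball, Real.dist_eq, lt_min_iff] at hu hv
  set R := |u - t₀| + |v - t₀|
  have huvR : |u - v| ≤ R := by simpa only [Real.dist_eq] using dist_triangle_right u v t₀
  have hmon : |(u - t₀) ^ (n + 1) - (v - t₀) ^ (n + 1)| ≤ (n + 1) * (|u - v| * R ^ n) := by
    calc _ ≤ |(u - t₀) - (v - t₀)| * (n + 1 : ℕ) * max |u - t₀| |v - t₀| ^ (n + 1 - 1) :=
          abs_pow_sub_pow_le _ _ _
      _ ≤ |u - v| * (n + 1 : ℕ) * R ^ n := by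
          rw [sub_sub_sub_cancel_right, Nat.add_sub_cancel]
          gcongr
          exact max_le (le_add_of_nonneg_right (abs_nonneg _))
            (le_add_of_nonneg_left (abs_nonneg _))
      _ = (n + 1) * (|u - v| * R ^ n) := by push_cast; ring
  have hrpow : |u - v| * R ^ n ≤ |u - v| ^ σ * R ^ (-s') :=
    mul_pow_le_rpow_mul_rpow (abs_nonneg _) huvR (by linarith) hσ hexp
  have hterm : 0 ≤ |u - v| ^ σ * R ^ (-s') := by positivity
  calc |(g u - Q.eval u) - (g v - Q.eval v)|
      = |((g u - P.eval u) - (g v - P.eval v)) +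
          c * ((u - t₀) ^ (n + 1) - (v - t₀) ^ (n + 1))| := by
        rw [hPQ, hPQ]
        ring_nf
    _ ≤ C * |u - v| ^ σ * R ^ (-s') + |c| * ((n + 1) * (|u - v| * R ^ n)) := by
        refine (abs_add_le _ _).trans (add_le_add ?_ ?_)
        · exact hbound u v (by rw [mem_ball, Real.dist_eq]; exact hu.1)
            (by rw [mem_ball, Real.dist_eq]; exact hv.1)
        · rw [abs_mul]
          gcongr
    _ ≤ (C + |c| * (n + 1) + 1) * |u - v| ^ σ * R ^ (-s') := by
        have hcterm : |c| * ((n + 1) * (|u - v| * R ^ n)) ≤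
            |c| * (n + 1) * (|u - v| ^ σ * R ^ (-s')) := by
          rw [← mul_assoc]
          gcongr
        nlinarith

theorem microlocal_gauge_subset_classical_general
    (d : ℝ) (hd : d ∈ Set.Ioo (0:ℝ) 1) (F : ℝ → ℝ → ℝ)
    (hF : SmoothVariation d 2 F) (t₀ : ℝ) (s : ℝ) (hs : s ≤ 0)
    (ε : ℝ) (hε : ε ∈ Set.Ioo (0:ℝ) d)
    (g : ℝ → ℝ) (hmem : MemCF F d s t₀ g) :
    MemC2ML (d - ε) s t₀ g := by
  obtain ⟨δ, hδ, M, hM, hFM⟩ :=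
    hF.exists_le_mul_rpow one_le_two (isCompact_closedBall t₀ 1) (sub_lt_self d hε.1)
  obtain ⟨C, hC, h, hh, P, hPdeg, hP⟩ := hmem.exists_rpow_increment_bound one_pos hδ hM hFM
  refine memC2ML_of_natDegree_le_floor_add_one (by linarith [hd.2, hε.1])
    (by linarith [hε.2]) hC hh ?_ hP
  calc (P.natDegree : ℤ) ≤ ⌊d - s⌋ := hPdeg
    _ ≤ ⌊d - ε - s + 1⌋ := Int.floor_mono (by linarith [hd.2, hε.2])
    _ = ⌊d - ε - s⌋ + 1 := Int.floor_add_one _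

/-- Theorem 2.1(b): `C_F^{d,s}(t₀) ⊆ C^{d−ε,s}(t₀)` for every `ε ∈ (0,d)`. -/
theorem microlocal_gauge_subset_classical
    (d : ℝ) (hd : d ∈ Set.Ioo (0:ℝ) 1) (F : ℝ → ℝ → ℝ)
    (hF : SmoothVariation d 2 F) (t₀ : ℝ) (s : ℝ) (hs : s ≤ 0)
    (ε : ℝ) (hε : ε ∈ Set.Ioo (0:ℝ) d)
    (g : ℝ → ℝ) (hg : Continuous g) (hmem : MemCF F d s t₀ g) :
    MemC2ML (d - ε) s t₀ g :=
  microlocal_gauge_subset_classical_general d hd F hF t₀ s hs ε hε g hmem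
end
end

section
/- Let d ∈ (0,1), let F ∈ SR_d^2(0+), let t₀ ∈ ℝ and let s ≤ 0. Then for every ε > 0 with d + ε < 1, C^{d+ε,s}(t₀) ⊆ C_F^{d,s}(t₀); that is, every continuous function in the classical 2-microlocal space C^{d+ε,s}(t₀) lies in the 2-microlocal space with gauge F of parameters (d,s) at t₀. -/
/-! Condition (a) says that the logarithmic derivative of `y ↦ F(u, u - y)` is about `-d / y`,
so `y ↦ F(u, u - y) / y ^ α` is decreasing for every `α > d` and small `y`; hence
`F(u, v) ≥ c (u - v) ^ α` near `(t₀, t₀)`, and an increment bound with `|u - v| ^ α` is one with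
gauge `F`. Choosing `α ∈ (d, d + ε)` with `⌊α - s⌋ = ⌊d - s⌋` handles the polynomial: the Taylor
terms at `t₀` of degree `> M = ⌊α - s⌋` have increments `O(R ^ M |u - v|)`, with
`R = |u - t₀| + |v - t₀|`, which is `O(|u - v| ^ α R ^ (-s))` because `α - s < M + 1`. -/

open Set Filter MeasureTheory intervalIntegral Polynomial Metric
open scoped Topology

noncomputable section

theorem pow_mul_le_rpow_mul_rpow {h R σ s : ℝ} {M : ℕ} (hh : 0 < h) (hhR : h ≤ R) (hR : R ≤ 1)
    (hσ : σ ≤ 1) (hM : σ - s < M + 1) : R ^ M * h ≤ h ^ σ * R ^ (-s) := by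
  have hR₀ : 0 < R := hh.trans_le hhR
  calc R ^ M * h = R ^ (M : ℝ) * h ^ (1 - σ) * h ^ σ := by
        rw [Real.rpow_natCast, mul_assoc, ← Real.rpow_add hh, sub_add_cancel, Real.rpow_one]
    _ ≤ R ^ (M : ℝ) * R ^ (1 - σ) * h ^ σ := by gcongr
    _ = R ^ (M + 1 - σ) * h ^ σ := by rw [← Real.rpow_add hR₀, add_sub_assoc]
    _ ≤ R ^ (-s) * h ^ σ := by
        gcongr ?_ * _
        exact Real.rpow_le_rpow_of_exponent_ge hR₀ hR (by linarith)
    _ = h ^ σ * R ^ (-s) := mul_comm _ _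

theorem antitoneOn_div_rpow_of_mul_deriv_le {φ φ' : ℝ → ℝ} {α H : ℝ}
    (hφ : ∀ y ∈ Ioc 0 H, HasDerivAt φ (φ' y) y) (hpos : ∀ y ∈ Ioc 0 H, 0 < φ y)
    (hle : ∀ y ∈ Ioc 0 H, y * φ' y ≤ α * φ y) :
    AntitoneOn (fun y => φ y / y ^ α) (Ioc 0 H) := by
  have hlog : ∀ y ∈ Ioc 0 H, HasDerivAt (fun y => Real.log (φ y) - α * Real.log y)
      (φ' y / φ y - α * y⁻¹) y := fun y hy =>
    ((hφ y hy).log (hpos y hy).ne').sub ((Real.hasDerivAt_log hy.1.ne').const_mul α)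
  have hanti : AntitoneOn (fun y => Real.log (φ y) - α * Real.log y) (Ioc 0 H) := by
    refine antitoneOn_of_hasDerivWithinAt_nonpos (f' := fun y => φ' y / φ y - α * y⁻¹)
      (convex_Ioc 0 H)
      (fun y hy => (hlog y hy).continuousAt.continuousWithinAt) (fun y hy => ?_) (fun y hy => ?_)
    · exact (hlog y (interior_subset hy)).hasDerivWithinAt
    · have hy' := interior_subset hy
      have hφy := hpos y hy'
      rw [sub_nonpos, div_le_iff₀ hφy, mul_right_comm, ← div_eq_mul_inv, le_div_iff₀ hy'.1]
      linarith [hle y hy']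
  intro x hx y hy hxy
  have hφx := hpos x hx
  have hφy := hpos y hy
  have hyα := Real.rpow_pos_of_pos hy.1 α
  have hxα := Real.rpow_pos_of_pos hx.1 α
  rw [← Real.log_le_log_iff (div_pos hφy hyα) (div_pos hφx hxα), Real.log_div hφy.ne' hyα.ne',
    Real.log_div hφx.ne' hxα.ne', Real.log_rpow hy.1, Real.log_rpow hx.1]
  exact hanti hx hy hxy

theorem exists_abs_eval_X_pow_mul_sub_le (S : ℝ[X]) (M : ℕ) :
    ∃ K, ∀ a b R : ℝ, R ≤ 1 → |a| ≤ R → |b| ≤ R →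
      |(X ^ (M + 1) * S).eval a - (X ^ (M + 1) * S).eval b| ≤ K * R ^ M * |a - b| := by
  set T : ℝ → ℝ := fun x => (M + 1) * S.eval x + x * (derivative S).eval x
  have hT : Continuous T := by fun_prop
  obtain ⟨K, hK⟩ := (isCompact_closedBall (0 : ℝ) 1).exists_bound_of_continuousOn hT.continuousOn
  refine ⟨K, fun a b R hR ha hb => ?_⟩
  -- Mean value theorem: the derivative `x ^ M * T x` is `O(R ^ M)` on `[-R, R]`.
  have hderiv : ∀ x, HasDerivAt (fun x => (X ^ (M + 1) * S).eval x) (x ^ M * T x) x := by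
    intro x
    simp only [eval_mul, eval_pow, eval_X]
    refine ((hasDerivAt_pow (M + 1) x).mul (S.hasDerivAt x)).congr_deriv ?_
    simp only [T, Nat.add_sub_cancel, Nat.cast_add, Nat.cast_one]
    ring
  have hbound : ∀ x ∈ closedBall (0 : ℝ) R, ‖x ^ M * T x‖ ≤ K * R ^ M := by
    intro x hx
    have hxR : ‖x‖ ≤ R := by simpa using hx
    rw [norm_mul, norm_pow, mul_comm]
    have hK0 : 0 ≤ K := (norm_nonneg _).trans (hK 0 (by simp))
    gcongr
    exact hK x (closedBall_subset_closedBall hR hx)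
  have := (convex_closedBall (0 : ℝ) R).norm_image_sub_le_of_norm_hasDerivWithin_le
    (fun x _ => (hderiv x).hasDerivWithinAt) hbound (by simpa using hb) (by simpa using ha)
  simpa only [Real.norm_eq_abs] using this

theorem exists_natDegree_le_abs_eval_sub_le (P : ℝ[X]) (t₀ : ℝ) (M : ℕ) :
    ∃ Q : ℝ[X], Q.natDegree ≤ M ∧ ∃ K, ∀ x y R : ℝ, R ≤ 1 → |x - t₀| ≤ R → |y - t₀| ≤ R →
      |(P - Q).eval x - (P - Q).eval y| ≤ K * R ^ M * |x - y| := by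
  -- Drop the terms of degree `> M` of the Taylor expansion of `P` at `t₀`.
  set P₀ := taylor t₀ P
  set S := P₀ /ₘ X ^ (M + 1)
  refine ⟨taylor (-t₀) (P₀ %ₘ X ^ (M + 1)), ?_, ?_⟩
  · have := natDegree_modByMonic_lt P₀ (monic_X_pow (M + 1))
      (fun h => by simpa using congrArg natDegree h)
    rw [natDegree_taylor]
    simp only [natDegree_X_pow] at this
    omega
  · have hsub : ∀ x, (P - taylor (-t₀) (P₀ %ₘ X ^ (M + 1))).eval x =
        (X ^ (M + 1) * S).eval (x - t₀) := by
      intro x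
      have := congrArg (eval (x - t₀)) (modByMonic_add_div P₀ (X ^ (M + 1)))
      rw [eval_add, taylor_eval, sub_add_cancel] at this
      rw [eval_sub, taylor_eval, ← this, ← sub_eq_add_neg]
      ring
    obtain ⟨K, hK⟩ := exists_abs_eval_X_pow_mul_sub_le S M
    refine ⟨K, fun x y R hR hx hy => ?_⟩
    simpa only [hsub, sub_sub_sub_cancel_right] using hK _ _ R hR hx hy

theorem CPlus.nonneg {k : ℕ} {F : ℝ → ℝ → ℝ} (hF : CPlus k F) {u v : ℝ} (hvu : v ≤ u) :
    0 ≤ F u v := by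
  have hmem : (u, v) ∈ closure Etil := by
    refine mem_closure_of_tendsto (f := fun h : ℝ => (u, v - h)) (b := 𝓝[>] 0) ?_ ?_
    · exact ((Continuous.tendsto (by fun_prop) 0).mono_left nhdsWithin_le_nhds).trans
        (by simp)
    · filter_upwards [self_mem_nhdsWithin] with h (hh : 0 < h)
      show v - h < u
      linarith
  exact ContinuousWithinAt.closure_le (f := fun _ => 0) (g := fun p : ℝ × ℝ => F p.1 p.2) hmem
    continuousWithinAt_const
    ((hF.cont (u, v) hvu).mono fun p (hp : p.2 < p.1) => hp.le) fun p hp => (hF.pos p hp).le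

theorem CPlus.hasDerivAt_apply_sub {k : ℕ} {F : ℝ → ℝ → ℝ} (hF : CPlus k F) (hk : 1 ≤ k)
    (u : ℝ) {y : ℝ} (hy : 0 < y) :
    HasDerivAt (fun y => F u (u - y)) (-pderiv2 0 1 F u (u - y)) y := by
  have hmem : ((u, u - y) : ℝ × ℝ) ∈ Etil := show u - y < u by linarith
  have hdiff : DifferentiableAt ℝ (fun p : ℝ × ℝ => F p.1 p.2) (u, u - y) :=
    (hF.smooth.contDiffAt ((isOpen_lt continuous_snd continuous_fst).mem_nhds hmem))
      |>.differentiableAt (by norm_cast; omega)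
  have hr : HasDerivAt (F u) (pderiv2 0 1 F u (u - y)) (u - y) := by
    simp only [pderiv2, iteratedDeriv_one, iteratedDeriv_zero]
    exact (hdiff.comp (u - y) (differentiableAt_const u |>.prodMk differentiableAt_id)).hasDerivAt
  have := hr.comp y ((hasDerivAt_id y).const_sub u)
  rwa [mul_neg_one] at this

theorem SmoothVariation.exists_rpow_le {ρ α : ℝ} {k : ℕ} {F : ℝ → ℝ → ℝ}
    (hF : SmoothVariation ρ k F) (hk : 1 ≤ k) (hρα : ρ < α) (hα : 0 < α) (t₀ : ℝ) :
    ∃ c > 0, ∃ r > 0, ∀ u ∈ ball t₀ r, ∀ v ∈ ball t₀ r, v ≤ u → c * (u - v) ^ α ≤ F u v := by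
  obtain ⟨h₀, hh₀, hA⟩ :=
    hF.condA (closedBall t₀ 1) (isCompact_closedBall t₀ 1) (α - ρ) (sub_pos.mpr hρα)
  set H := h₀ / 2
  have hH : 0 < H := by positivity
  have hHh₀ : H < h₀ := half_lt_self hh₀
  have hcont : Continuous fun t => F t (t - H) :=
    hF.mem.smooth.continuousOn.comp_continuous (f := fun t => (t, t - H)) (by fun_prop)
      fun t => show t - H < t by linarith
  obtain ⟨t₁, -, hmin⟩ := (isCompact_closedBall t₀ 1).exists_isMinOn
    (nonempty_closedBall.mpr zero_le_one) hcont.continuousOn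
  have hm : 0 < F t₁ (t₁ - H) := hF.mem.pos (t₁, t₁ - H) (show t₁ - H < t₁ by linarith)
  refine ⟨F t₁ (t₁ - H) / H ^ α, by positivity, min 1 (H / 2), by positivity,
    fun u hu v hv hvu => ?_⟩
  have hu₁ : u ∈ closedBall t₀ 1 := ball_subset_closedBall (ball_subset_ball (min_le_left _ _) hu)
  rcases hvu.eq_or_lt with rfl | hvu
  · rw [sub_self, Real.zero_rpow hα.ne', mul_zero]
    exact hF.mem.nonneg le_rfl
  have huvH : u - v ≤ H := by
    have hu' : |u - t₀| < min 1 (H / 2) := hu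
    have hv' : |v - t₀| < min 1 (H / 2) := hv
    have := dist_triangle_right u v t₀
    simp only [Real.dist_eq] at this
    linarith [le_abs_self (u - v), min_le_right 1 (H / 2)]
  have hlogderiv : ∀ y ∈ Ioc 0 H, y * -pderiv2 0 1 F u (u - y) ≤ α * F u (u - y) := by
    intro y hy
    have hFy : 0 < F u (u - y) := hF.mem.pos (u, u - y) (show u - y < u by linarith [hy.1])
    have hAy := (abs_lt.mp (hA y hy.1 (hy.2.trans_lt hHh₀) u hu₁)).1
    have : -α * F u (u - y) < y * pderiv2 0 1 F u (u - y) := by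
      rw [← lt_div_iff₀ hFy]
      linarith
    linarith
  have hmono := antitoneOn_div_rpow_of_mul_deriv_le (φ := fun y => F u (u - y))
    (fun y hy => hF.mem.hasDerivAt_apply_sub hk u hy.1)
    (fun y hy => hF.mem.pos (u, u - y) (show u - y < u by linarith [hy.1])) hlogderiv
    ⟨sub_pos.mpr hvu, huvH⟩ ⟨hH, le_rfl⟩ huvH
  simp only [sub_sub_cancel] at hmono
  calc F t₁ (t₁ - H) / H ^ α * (u - v) ^ α ≤ F u (u - H) / H ^ α * (u - v) ^ α := by
        gcongr
        exact hmin hu₁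
    _ ≤ F u v := by rwa [le_div_iff₀ (Real.rpow_pos_of_pos (sub_pos.mpr hvu) α)] at hmono

theorem MemC2ML.mono {σ σ' s t₀ : ℝ} {g : ℝ → ℝ} (hg : MemC2ML σ s t₀ g) (hσ : σ' ≤ σ)
    (hσ' : σ' ≤ 1) (hσ's : 0 ≤ σ' - s) : MemC2ML σ' s t₀ g := by
  obtain ⟨C, hC, r, hr, P, -, hP⟩ := hg
  set M := ⌊σ' - s⌋₊
  obtain ⟨Q, hQ, K, hK⟩ := exists_natDegree_le_abs_eval_sub_le P t₀ M
  refine ⟨C + |K|, by positivity, min r (1 / 2), by positivity, Q, ?_, fun u v hu hv => ?_⟩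
  · rw [← Int.natCast_floor_eq_floor hσ's]
    exact_mod_cast hQ
  set R := |u - t₀| + |v - t₀|
  have hu' : |u - t₀| < min r (1 / 2) := hu
  have hv' : |v - t₀| < min r (1 / 2) := hv
  rcases eq_or_ne u v with rfl | huv
  · simp only [sub_self, abs_zero]
    positivity
  have hh : 0 < |u - v| := abs_pos.mpr (sub_ne_zero.mpr huv)
  have hhR : |u - v| ≤ R := by
    simpa only [Real.dist_eq] using dist_triangle_right u v t₀
  have hR : R ≤ 1 := by
    have := min_le_right r (1 / 2)
    linarith
  have hPQ := hK u v R hR (le_add_of_nonneg_right (abs_nonneg _))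
    (le_add_of_nonneg_left (abs_nonneg _))
  rw [eval_sub, eval_sub] at hPQ
  calc |(g u - Q.eval u) - (g v - Q.eval v)|
      = |((g u - P.eval u) - (g v - P.eval v)) +
          ((P.eval u - Q.eval u) - (P.eval v - Q.eval v))| := by ring_nf
    _ ≤ C * |u - v| ^ σ * R ^ (-s) + K * R ^ M * |u - v| :=
        (abs_add_le _ _).trans (add_le_add (hP u v (ball_subset_ball (min_le_left _ _) hu)
          (ball_subset_ball (min_le_left _ _) hv)) hPQ)
    _ ≤ C * |u - v| ^ σ' * R ^ (-s) + |K| * (|u - v| ^ σ' * R ^ (-s)) := by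
        have hgrow : R ^ M * |u - v| ≤ |u - v| ^ σ' * R ^ (-s) :=
          pow_mul_le_rpow_mul_rpow hh hhR hR hσ' (Nat.lt_floor_add_one (σ' - s))
        rw [mul_assoc K]
        gcongr ?_ * _ + ?_
        · exact mul_le_mul_of_nonneg_left
            (Real.rpow_le_rpow_of_exponent_ge hh (hhR.trans hR) hσ) hC.le
        · exact mul_le_mul (le_abs_self K) hgrow (by positivity) (abs_nonneg K)
    _ = (C + |K|) * |u - v| ^ σ' * R ^ (-s) := by ring

theorem memCF_of_memC2ML {F : ℝ → ℝ → ℝ} {d α s t₀ : ℝ} {g : ℝ → ℝ} (hg : MemC2ML α s t₀ g)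
    (hαd : ⌊α - s⌋ ≤ ⌊d - s⌋)
    (hF : ∃ c > 0, ∃ r > 0, ∀ u ∈ ball t₀ r, ∀ v ∈ ball t₀ r, v ≤ u → c * (u - v) ^ α ≤ F u v) :
    MemCF F d s t₀ g := by
  obtain ⟨C, hC, h, hh, P, hP, hPg⟩ := hg
  obtain ⟨c, hc, r, hr, hF⟩ := hF
  refine ⟨C / c, by positivity, min h r, by positivity, P, hP.trans hαd, fun u v hu hv hvu => ?_⟩
  have hu' := ball_subset_ball (min_le_right h r) hu
  have hv' := ball_subset_ball (min_le_right h r) hv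
  calc |(g u - P.eval u) - (g v - P.eval v)|
      ≤ C * |u - v| ^ α * (|u - t₀| + |v - t₀|) ^ (-s) :=
        hPg u v (ball_subset_ball (min_le_left h r) hu) (ball_subset_ball (min_le_left h r) hv)
    _ = C / c * (c * (u - v) ^ α) * (|u - t₀| + |v - t₀|) ^ (-s) := by
        rw [abs_of_nonneg (sub_nonneg.mpr hvu)]
        field_simp
    _ ≤ C / c * F u v * (|u - t₀| + |v - t₀|) ^ (-s) := by
        gcongr
        exact hF u hu' v hv' hvu

theorem classical_subset_microlocal_gauge_general
    (d : ℝ) (hd : d ∈ Set.Ioo (0:ℝ) 1) (F : ℝ → ℝ → ℝ)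
    (hF : SmoothVariation d 2 F) (t₀ : ℝ) (s : ℝ) (hs : s ≤ 0)
    (ε : ℝ) (hε : 0 < ε) (hεd : d + ε < 1)
    (g : ℝ → ℝ) (hmem : MemC2ML (d + ε) s t₀ g) :
    MemCF F d s t₀ g := by
  have hds : d < ⌊d - s⌋ + 1 + s := by linarith [Int.lt_floor_add_one (d - s)]
  obtain ⟨α, hdα, hα⟩ := exists_between (lt_min (lt_add_of_pos_right d hε) hds)
  obtain ⟨hαε, hαs⟩ := lt_min_iff.mp hα
  exact memCF_of_memC2ML (hmem.mono hαε.le (by linarith) (by linarith [hd.1]))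
    (Int.floor_le_iff.mpr (by linarith))
    (hF.exists_rpow_le (by norm_num) hdα (by linarith [hd.1]) t₀)

/-- Theorem 2.1(c): `C^{d+ε,s}(t₀) ⊆ C_F^{d,s}(t₀)` for every `ε > 0`
with `d + ε < 1`. -/
theorem classical_subset_microlocal_gauge
    (d : ℝ) (hd : d ∈ Set.Ioo (0:ℝ) 1) (F : ℝ → ℝ → ℝ)
    (hF : SmoothVariation d 2 F) (t₀ : ℝ) (s : ℝ) (hs : s ≤ 0)
    (ε : ℝ) (hε : 0 < ε) (hεd : d + ε < 1)
    (g : ℝ → ℝ) (hg : Continuous g) (hmem : MemC2ML (d + ε) s t₀ g) :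
    MemCF F d s t₀ g :=
  classical_subset_microlocal_gauge_general d hd F hF t₀ s hs ε hε hεd g hmem
end
end

section
/- Let d ∈ (0,1), let F ∈ SR_d^2(0+), let t₀ ∈ ℝ and let s ≤ 0. Then for every ε ∈ (0,d), C_F^{d,s}(t₀) ⊆ C^{d−s−ε}(t₀); that is, every continuous function in the 2-microlocal space with gauge F of parameters (d,s) at t₀ belongs to the pointwise Hölder space of order d − s − ε at t₀. -/
open Set Filter MeasureTheory intervalIntegral Polynomial Metric
open scoped Topology

noncomputable section

/-!
Conditions (a) and (b) of smooth variation say that `r ↦ F(t₀, t₀ - r)` and `r ↦ F(t₀ + r, t₀)`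
have logarithmic derivative close to `d / r` as `r ↓ 0`. Hence `F · r ^ (-(d - ε))` is monotone
along both, i.e. both are `O(r ^ (d - ε))`. Taking `v = t₀` or `u = t₀` in the 2-microlocal
estimate then gives `|(g - P)(t) - (g - P)(t₀)| = O(|t - t₀| ^ (d - s - ε))`. Since
`d - s < (d - s - ε) + 1`, only the top Taylor term of `P` at `t₀` can exceed the admissible
degree `⌊d - s - ε⌋`, and that term is itself `O(|t - t₀| ^ (d - s - ε))`.
-/

theorem Polynomial.exists_eq_add_C_mul_X_sub_C_pow {R : Type*} [CommRing R] [Nontrivial R]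
    (P : R[X]) (t₀ : R) {m : ℕ} (hP : P.natDegree ≤ m + 1) :
    ∃ Q : R[X], Q.natDegree ≤ m ∧ ∃ a : R, P = Q + C a * (X - C t₀) ^ (m + 1) := by
  have hq : ((X - C t₀) ^ (m + 1)).Monic := (monic_X_sub_C t₀).pow _
  have hqdeg : ((X - C t₀) ^ (m + 1)).natDegree = m + 1 := by
    rw [(monic_X_sub_C t₀).natDegree_pow, natDegree_X_sub_C, mul_one]
  have hquot : (P /ₘ (X - C t₀) ^ (m + 1)).natDegree = 0 := by
    rw [natDegree_divByMonic P hq, hqdeg]; omega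
  refine ⟨P %ₘ (X - C t₀) ^ (m + 1), ?_, (P /ₘ (X - C t₀) ^ (m + 1)).coeff 0, ?_⟩
  · have := natDegree_modByMonic_lt P hq (fun h => by simp [h] at hqdeg)
    omega
  · rw [← eq_C_of_natDegree_eq_zero hquot, mul_comm, modByMonic_add_div P]

theorem ptwHolder_of_abs_sub_sub_le {l t₀ K h : ℝ} {g : ℝ → ℝ} {P : ℝ[X]} (hl : 0 ≤ l)
    (hh : 0 < h) (hP : (P.natDegree : ℤ) ≤ ⌊l⌋ + 1)
    (hg : ∀ t ∈ ball t₀ h, t ≠ t₀ →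
      |(g t - P.eval t) - (g t₀ - P.eval t₀)| ≤ K * |t - t₀| ^ l) :
    PtwHolder l t₀ g := by
  have hfloor : (⌊l⌋₊ : ℤ) = ⌊l⌋ := Int.natCast_floor_eq_floor hl
  obtain ⟨Q, hQ, a, hPQ⟩ :=
    P.exists_eq_add_C_mul_X_sub_C_pow t₀ (m := ⌊l⌋₊) (by omega)
  refine ⟨|K| + |a| + 1, by positivity, min h 1, by positivity,
    Q + Polynomial.C (g t₀ - P.eval t₀), by rw [natDegree_add_C, ← hfloor]; exact_mod_cast hQ,
    fun t ht => ?_⟩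
  have hrl : 0 ≤ |t - t₀| ^ l := by positivity
  have hr1 : |t - t₀| ≤ 1 := (mem_ball_iff_norm.mp ht).le.trans (min_le_right _ _)
  have hincr : |(g t - P.eval t) - (g t₀ - P.eval t₀)| ≤ |K| * |t - t₀| ^ l := by
    rcases eq_or_ne t t₀ with rfl | hne
    · simpa using mul_nonneg (abs_nonneg K) hrl
    · exact (hg t (ball_subset_ball (min_le_left _ _) ht) hne).trans
        (mul_le_mul_of_nonneg_right (le_abs_self K) hrl)
  have htail : |a * (t - t₀) ^ (⌊l⌋₊ + 1)| ≤ |a| * |t - t₀| ^ l := by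
    rw [abs_mul, abs_pow, ← Real.rpow_natCast]
    refine mul_le_mul_of_nonneg_left (Real.rpow_le_rpow_of_exponent_ge' (abs_nonneg _) hr1 hl ?_)
      (abs_nonneg a)
    push_cast
    exact (Nat.lt_floor_add_one l).le
  have hsplit : g t - (Q + Polynomial.C (g t₀ - P.eval t₀)).eval t =
      ((g t - P.eval t) - (g t₀ - P.eval t₀)) + a * (t - t₀) ^ (⌊l⌋₊ + 1) := by
    rw [hPQ]; simp only [eval_add, eval_mul, eval_C, eval_pow, eval_sub, eval_X]; ring
  calc |g t - (Q + Polynomial.C (g t₀ - P.eval t₀)).eval t|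
      ≤ |K| * |t - t₀| ^ l + |a| * |t - t₀| ^ l :=
        hsplit ▸ (abs_add_le _ _).trans (add_le_add hincr htail)
    _ ≤ (|K| + |a| + 1) * |t - t₀| ^ l := by nlinarith

theorem monotoneOn_mul_rpow_neg_of_mul_le_mul_deriv {φ φ' : ℝ → ℝ} {a c : ℝ}
    (hder : ∀ x ∈ Ioo 0 a, HasDerivAt φ (φ' x) x)
    (hφ : ∀ x ∈ Ioo 0 a, c * φ x ≤ x * φ' x) :
    MonotoneOn (fun x => φ x * x ^ (-c)) (Ioo 0 a) := by
  have hderiv : ∀ x ∈ Ioo 0 a, HasDerivAt (fun x => φ x * x ^ (-c))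
      (x ^ (-c - 1) * (x * φ' x - c * φ x)) x := by
    intro x hx
    refine ((hder x hx).mul
      (Real.hasDerivAt_rpow_const (p := -c) (Or.inl hx.1.ne'))).congr_deriv ?_
    rw [Real.rpow_sub hx.1, Real.rpow_one]
    field_simp [hx.1.ne']
    ring
  refine monotoneOn_of_hasDerivWithinAt_nonneg
    (f' := fun x => x ^ (-c - 1) * (x * φ' x - c * φ x)) (convex_Ioo 0 a)
    (fun x hx => (hderiv x hx).continuousAt.continuousWithinAt) (fun x hx => ?_) (fun x hx => ?_)
  · rw [interior_Ioo] at hx ⊢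
    exact (hderiv x hx).hasDerivWithinAt
  · rw [interior_Ioo] at hx
    exact mul_nonneg (Real.rpow_nonneg hx.1.le _) (sub_nonneg.2 (hφ x hx))

theorem exists_le_mul_rpow_of_lt_mul_deriv_div {φ φ' : ℝ → ℝ} {a c : ℝ} (ha : 0 < a)
    (hpos : ∀ x ∈ Ioo 0 a, 0 < φ x) (hder : ∀ x ∈ Ioo 0 a, HasDerivAt φ (φ' x) x)
    (hlog : ∀ x ∈ Ioo 0 a, c < x * φ' x / φ x) :
    ∃ M, ∀ x ∈ Ioc 0 (a / 2), φ x ≤ M * x ^ c := by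
  have hmono := monotoneOn_mul_rpow_neg_of_mul_le_mul_deriv hder
    fun x hx => ((lt_div_iff₀ (hpos x hx)).1 (hlog x hx)).le
  refine ⟨φ (a / 2) * (a / 2) ^ (-c), fun x hx => ?_⟩
  have hxa : x ∈ Ioo 0 a := ⟨hx.1, hx.2.trans_lt (half_lt_self ha)⟩
  calc φ x = φ x * x ^ (-c) * x ^ c := by
        rw [mul_assoc, ← Real.rpow_add hx.1, neg_add_cancel, Real.rpow_zero, mul_one]
    _ ≤ φ (a / 2) * (a / 2) ^ (-c) * x ^ c :=
        mul_le_mul_of_nonneg_right (hmono hxa ⟨half_pos ha, half_lt_self ha⟩ hx.2)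
          (Real.rpow_nonneg hx.1.le _)

@[simp]
theorem pderiv2_zero_one (F : ℝ → ℝ → ℝ) (s r : ℝ) : pderiv2 0 1 F s r = deriv (F s) r := by
  simp [pderiv2]

@[simp]
theorem pderiv2_one_zero (F : ℝ → ℝ → ℝ) (s r : ℝ) :
    pderiv2 1 0 F s r = deriv (fun s' => F s' r) s := by
  simp [pderiv2]

namespace CPlus

variable {k : ℕ} {F : ℝ → ℝ → ℝ}

theorem differentiableAt (hF : CPlus k F) (hk : k ≠ 0) {s r : ℝ} (h : r < s) :
    DifferentiableAt ℝ (fun p : ℝ × ℝ => F p.1 p.2) (s, r) :=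
  (hF.smooth.contDiffAt ((isOpen_lt continuous_snd continuous_fst).mem_nhds h)).differentiableAt
    (by exact_mod_cast hk)

theorem hasDerivAt_snd (hF : CPlus k F) (hk : k ≠ 0) {s r : ℝ} (h : r < s) :
    HasDerivAt (F s) (pderiv2 0 1 F s r) r := by
  rw [pderiv2_zero_one]
  exact ((hF.differentiableAt hk h).comp r
    ((differentiableAt_const s).prodMk differentiableAt_id)).hasDerivAt

theorem hasDerivAt_fst (hF : CPlus k F) (hk : k ≠ 0) {s r : ℝ} (h : r < s) :
    HasDerivAt (fun s' => F s' r) (pderiv2 1 0 F s r) s := by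
  rw [pderiv2_one_zero]
  exact ((hF.differentiableAt hk h).comp s
    (differentiableAt_id.prodMk (differentiableAt_const r))).hasDerivAt

end CPlus

namespace SmoothVariation

variable {ρ : ℝ} {k : ℕ} {F : ℝ → ℝ → ℝ}

theorem exists_le_mul_rpow_sub (hF : SmoothVariation ρ k F) (hk : k ≠ 0) (t₀ : ℝ) {ε : ℝ}
    (hε : 0 < ε) : ∃ δ > 0, ∃ M, ∀ r ∈ Ioc 0 δ, F t₀ (t₀ - r) ≤ M * r ^ (ρ - ε) := by
  obtain ⟨a, ha, hA⟩ := hF.condA {t₀} isCompact_singleton ε hε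
  have hlt : ∀ x ∈ Ioo 0 a, t₀ - x < t₀ := fun x hx => sub_lt_self _ hx.1
  obtain ⟨M, hM⟩ := exists_le_mul_rpow_of_lt_mul_deriv_div (c := ρ - ε)
    (φ := fun x => F t₀ (t₀ - x)) (φ' := fun x => -pderiv2 0 1 F t₀ (t₀ - x)) ha
    (fun x hx => hF.mem.pos (t₀, t₀ - x) (hlt x hx))
    (fun x hx => by
      simpa [Function.comp_def] using
        (hF.mem.hasDerivAt_snd hk (hlt x hx)).comp x ((hasDerivAt_id x).const_sub t₀))
    (fun x hx => by
      have := (abs_lt.1 (hA x hx.1 hx.2 t₀ rfl)).2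
      rw [mul_neg, neg_div]
      linarith)
  exact ⟨a / 2, half_pos ha, M, hM⟩

theorem exists_le_mul_rpow_add (hF : SmoothVariation ρ k F) (hk : k ≠ 0) (t₀ : ℝ) {ε : ℝ}
    (hε : 0 < ε) : ∃ δ > 0, ∃ M, ∀ r ∈ Ioc 0 δ, F (t₀ + r) t₀ ≤ M * r ^ (ρ - ε) := by
  obtain ⟨a, ha, hB⟩ := hF.condB {t₀} isCompact_singleton ε hε
  have hlt : ∀ x ∈ Ioo 0 a, t₀ < t₀ + x := fun x hx => lt_add_of_pos_right _ hx.1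
  obtain ⟨M, hM⟩ := exists_le_mul_rpow_of_lt_mul_deriv_div (c := ρ - ε)
    (φ := fun x => F (t₀ + x) t₀) (φ' := fun x => pderiv2 1 0 F (t₀ + x) t₀) ha
    (fun x hx => hF.mem.pos (t₀ + x, t₀) (hlt x hx))
    (fun x hx => by
      simpa [Function.comp_def] using
        (hF.mem.hasDerivAt_fst hk (hlt x hx)).comp x ((hasDerivAt_id x).const_add t₀))
    (fun x hx => by linarith [(abs_lt.1 (hB x hx.1 hx.2 t₀ rfl)).1])
  exact ⟨a / 2, half_pos ha, M, hM⟩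

theorem exists_le_mul_abs_rpow (hF : SmoothVariation ρ k F) (hk : k ≠ 0) (t₀ : ℝ) {ε : ℝ}
    (hε : 0 < ε) : ∃ δ > 0, ∃ M, ∀ t, t ≠ t₀ → |t - t₀| ≤ δ →
      F (max t t₀) (min t t₀) ≤ M * |t - t₀| ^ (ρ - ε) := by
  obtain ⟨δ₁, hδ₁, M₁, hM₁⟩ := hF.exists_le_mul_rpow_sub hk t₀ hε
  obtain ⟨δ₂, hδ₂, M₂, hM₂⟩ := hF.exists_le_mul_rpow_add hk t₀ hε
  refine ⟨min δ₁ δ₂, lt_min hδ₁ hδ₂, max M₁ M₂, fun t hne ht => ?_⟩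
  have hpow : 0 ≤ |t - t₀| ^ (ρ - ε) := by positivity
  have hr : |t - t₀| ∈ Ioc 0 (min δ₁ δ₂) := ⟨abs_pos.2 (sub_ne_zero.2 hne), ht⟩
  rcases hne.lt_or_gt with hlt | hgt
  · have := hM₁ _ ⟨hr.1, hr.2.trans (min_le_left _ _)⟩
    rw [show t₀ - |t - t₀| = t by rw [abs_of_neg (sub_neg.2 hlt)]; ring] at this
    rw [max_eq_right hlt.le, min_eq_left hlt.le]
    exact this.trans (mul_le_mul_of_nonneg_right (le_max_left _ _) hpow)
  · have := hM₂ _ ⟨hr.1, hr.2.trans (min_le_right _ _)⟩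
    rw [show t₀ + |t - t₀| = t by rw [abs_of_pos (sub_pos.2 hgt)]; ring] at this
    rw [max_eq_left hgt.le, min_eq_right hgt.le]
    exact this.trans (mul_le_mul_of_nonneg_right (le_max_right _ _) hpow)

end SmoothVariation

theorem MemCF.exists_abs_sub_sub_le {F : ℝ → ℝ → ℝ} {d s t₀ : ℝ} {g : ℝ → ℝ}
    (hg : MemCF F d s t₀ g) :
    ∃ C > 0, ∃ h > 0, ∃ P : ℝ[X], (P.natDegree : ℤ) ≤ ⌊d - s⌋ ∧ ∀ t ∈ ball t₀ h,
      |(g t - P.eval t) - (g t₀ - P.eval t₀)| ≤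
        C * F (max t t₀) (min t t₀) * |t - t₀| ^ (-s) := by
  obtain ⟨C, hC, h, hh, P, hP, hincr⟩ := hg
  refine ⟨C, hC, h, hh, P, hP, fun t ht => ?_⟩
  rcases le_total t t₀ with hle | hge
  · rw [max_eq_right hle, min_eq_left hle, abs_sub_comm]
    simpa using hincr t₀ t (mem_ball_self hh) ht hle
  · rw [max_eq_left hge, min_eq_right hge]
    simpa using hincr t t₀ ht (mem_ball_self hh) hge

theorem microlocal_gauge_subset_holder_general
    (d : ℝ) (hd : d ∈ Set.Ioo (0:ℝ) 1) (F : ℝ → ℝ → ℝ)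
    (hF : SmoothVariation d 2 F) (t₀ : ℝ) (s : ℝ) (hs : s ≤ 0)
    (ε : ℝ) (hε : ε ∈ Set.Ioo (0:ℝ) d)
    (g : ℝ → ℝ) (hmem : MemCF F d s t₀ g) :
    PtwHolder (d - s - ε) t₀ g := by
  obtain ⟨δ, hδ, M, hM⟩ := hF.exists_le_mul_abs_rpow two_ne_zero t₀ hε.1
  obtain ⟨C, hC, h, hh, P, hP, hincr⟩ := hmem.exists_abs_sub_sub_le
  refine ptwHolder_of_abs_sub_sub_le (by linarith [hε.2]) (lt_min hh hδ) (P := P) (K := C * M)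
    ?_ fun t ht hne => ?_
  · calc (P.natDegree : ℤ) ≤ ⌊d - s⌋ := hP
      _ ≤ ⌊d - s - ε + 1⌋ := Int.floor_le_floor (by linarith [hε.2, hd.2])
      _ = ⌊d - s - ε⌋ + 1 := Int.floor_add_one _
  have hr : |t - t₀| < min h δ := mem_ball_iff_norm.mp ht
  calc |(g t - P.eval t) - (g t₀ - P.eval t₀)|
      ≤ C * F (max t t₀) (min t t₀) * |t - t₀| ^ (-s) :=
        hincr t (ball_subset_ball (min_le_left _ _) ht)
    _ ≤ C * (M * |t - t₀| ^ (d - ε)) * |t - t₀| ^ (-s) := by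
        gcongr
        exact hM t hne (hr.le.trans (min_le_right _ _))
    _ = C * M * |t - t₀| ^ (d - s - ε) := by
        rw [mul_assoc, mul_assoc, ← Real.rpow_add (abs_pos.2 (sub_ne_zero.2 hne))]
        ring_nf

/-- Theorem 2.1(d): `C_F^{d,s}(t₀) ⊆ C^{d−s−ε}(t₀)` for every `ε ∈ (0,d)`. -/
theorem microlocal_gauge_subset_holder
    (d : ℝ) (hd : d ∈ Set.Ioo (0:ℝ) 1) (F : ℝ → ℝ → ℝ)
    (hF : SmoothVariation d 2 F) (t₀ : ℝ) (s : ℝ) (hs : s ≤ 0)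
    (ε : ℝ) (hε : ε ∈ Set.Ioo (0:ℝ) d)
    (g : ℝ → ℝ) (hg : Continuous g) (hmem : MemCF F d s t₀ g) :
    PtwHolder (d - s - ε) t₀ g :=
  microlocal_gauge_subset_holder_general d hd F hF t₀ s hs ε hε g hmem
end
end
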